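/- arXiv:2109.06804 — 4 statements merged into one kernel-verified Lean document; each statement's English description precedes it below -/
import Mathlib

section
/- Ogden's lemma (weak version): for every context-free language L there exists an integer N such that for any word w ∈ L with at least N marked positions, there exists a decomposition w = w1 w2 w3 w4 w5 such that w2 w4 contains at least one marked position and for all n ≥ 0, w1 w2^n w3 w4^n w5 ∈ L. -/
namespace OgdenAux

open ContextFreeGrammar

variable {T : Type*}

/-- Parse trees (raw). -/
inductive PT (g : ContextFreeGrammar T) where
  | leaf (t : T)
  | node (r : ContextFreeRule T g.NT) (c : List (PT g))

variable {g : ContextFreeGrammar T}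

def PT.yield : PT g → List T
  | .leaf t => [t]
  | .node _ c => (c.attach.map (fun x => x.1.yield)).flatten
decreasing_by
  simp_wf
  have := List.sizeOf_lt_of_mem x.2
  omega

@[simp] lemma PT.yield_leaf (t : T) : (PT.leaf t : PT g).yield = [t] := by
  rw [PT.yield]

@[simp] lemma PT.yield_node (r : ContextFreeRule T g.NT) (c : List (PT g)) :
    (PT.node r c).yield = (c.map PT.yield).flatten := by
  rw [PT.yield, List.attach_map_val]

/-- Well-formedness of a parse tree with a given root symbol. -/
inductive WF : PT g → Symbol T g.NT → Prop
  | leaf (t : T) : WF (.leaf t) (.terminal t)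
  | node {r : ContextFreeRule T g.NT} {c : List (PT g)} (hr : r ∈ g.rules)
      (h : List.Forall₂ WF c r.output) : WF (.node r c) (.nonterminal r.input)

lemma PT.sizeOf_lt_of_mem {q : PT g} {c : List (PT g)} (h : q ∈ c)
    (r : ContextFreeRule T g.NT) : sizeOf q < sizeOf (PT.node r c) := by
  have := List.sizeOf_lt_of_mem h
  have h2 : sizeOf (PT.node r c) = 1 + sizeOf r + sizeOf c := by simp
  omega

theorem PT.strongInd {motive : PT g → Prop}
    (ih : ∀ p : PT g, (∀ q : PT g, sizeOf q < sizeOf p → motive q) → motive p)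
    (p : PT g) : motive p := by
  generalize hn : sizeOf p = n
  induction n using Nat.strong_induction_on generalizing p with
  | _ n IH => subst hn; exact ih p (fun q hq => IH _ hq q rfl)

theorem derives_yield : ∀ p : PT g, ∀ s, WF p s →
    g.Derives [s] (p.yield.map Symbol.terminal) := by
  intro p
  induction p using PT.strongInd with
  | ih p IH =>
    intro s hs
    cases hs with
    | leaf t => simp only [PT.yield_leaf, List.map_cons, List.map_nil]; exact Derives.refl _
    | @node r c hr hf =>
      have key : ∀ (cs : List (PT g)) (ss : List (Symbol T g.NT)),
          (∀ q ∈ cs, ∀ s', WF q s' → g.Derives [s'] (q.yield.map Symbol.terminal)) →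
          List.Forall₂ WF cs ss →
          g.Derives ss (((cs.map PT.yield).flatten).map Symbol.terminal) := by
        intro cs ss hmem hf2
        induction hf2 with
        | nil => exact Derives.refl _
        | @cons q s' cs' ss' hqs htl ih2 =>
          simp only [List.map_cons, List.flatten_cons, List.map_append]
          have h1 : g.Derives [s'] (q.yield.map Symbol.terminal) :=
            hmem q (by simp) s' hqs
          have h2 : g.Derives ss' (((cs'.map PT.yield).flatten).map Symbol.terminal) :=
            ih2 (fun q hq => hmem q (by simp [hq]))
          have h3 : g.Derives ([s'] ++ ss') ((q.yield.map Symbol.terminal) ++ ss') :=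
            h1.append_right ss'
          exact h3.trans (h2.append_left _)
      have hstep : g.Derives [Symbol.nonterminal r.input] r.output :=
        (Produces.single ⟨r, hr, ContextFreeRule.Rewrites.input_output⟩)
      refine hstep.trans ?_
      simpa using key c r.output
        (fun q hq s' h' => IH q (PT.sizeOf_lt_of_mem hq r) s' h') hf

theorem derives_yield_list {cs : List (PT g)} {ss : List (Symbol T g.NT)}
    (hf : List.Forall₂ WF cs ss) :
    g.Derives ss (((cs.map PT.yield).flatten).map Symbol.terminal) := by
  induction hf with
  | nil => exact Derives.refl _
  | @cons q s' cs' ss' hqs htl ih =>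
    simp only [List.map_cons, List.flatten_cons, List.map_append]
    exact ((derives_yield q s' hqs).append_right ss').trans (ih.append_left _)

theorem trees_of_derives : ∀ (u : List (Symbol T g.NT)) (w : List T),
    g.Derives u (w.map Symbol.terminal) →
    ∃ ps : List (PT g), List.Forall₂ WF ps u ∧ (ps.map PT.yield).flatten = w := by
  intro u w h
  induction h using Relation.ReflTransGen.head_induction_on with
  | refl =>
    refine ⟨w.map PT.leaf, ?_, ?_⟩
    · induction w with
      | nil => simp
      | cons a l ih => exact List.Forall₂.cons (WF.leaf a) ih
    · induction w with
      | nil => simp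
      | cons a l ih => simpa using ih
  | head hstep _ ih =>
    obtain ⟨r, hr, hrw⟩ := hstep
    obtain ⟨p, q, rfl, rfl⟩ := hrw.exists_parts
    obtain ⟨ps, hf, hy⟩ := ih
    have h1 := List.forall₂_take_append ps (p ++ r.output) q hf
    have h2 := List.forall₂_drop_append ps (p ++ r.output) q hf
    have h3 := List.forall₂_take_append _ p r.output h1
    have h4 := List.forall₂_drop_append _ p r.output h1
    set ps1 := (ps.take (p ++ r.output).length).take p.length with hps1
    set ps2 := (ps.take (p ++ r.output).length).drop p.length with hps2
    set ps3 := ps.drop (p ++ r.output).length with hps3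
    have hsplit : ps = ps1 ++ ps2 ++ ps3 := by
      rw [hps1, hps2, hps3, List.take_append_drop, List.take_append_drop]
    refine ⟨ps1 ++ [PT.node r ps2] ++ ps3, ?_, ?_⟩
    · exact List.rel_append (List.rel_append h3
        (List.Forall₂.cons (WF.node hr h4) List.Forall₂.nil)) h2
    · rw [hsplit] at hy
      simpa using hy



/-- Number of marks in the window `[o, o+n)`. -/
def mcount (marks : Finset ℕ) (o n : ℕ) : ℕ :=
  (marks.filter fun i => o ≤ i ∧ i < o + n).card

lemma mcount_le (marks : Finset ℕ) (o n : ℕ) : mcount marks o n ≤ n := by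
  have h : (marks.filter fun i => o ≤ i ∧ i < o + n) ⊆ Finset.Ico o (o + n) := by
    intro i hi
    simp only [Finset.mem_filter] at hi
    simp [Finset.mem_Ico, hi.2.1, hi.2.2]
  calc mcount marks o n ≤ (Finset.Ico o (o + n)).card := Finset.card_le_card h
  _ = n := by simp

lemma mcount_add (marks : Finset ℕ) (o a b : ℕ) :
    mcount marks o (a + b) = mcount marks o a + mcount marks (o + a) b := by
  unfold mcount
  rw [← Finset.card_union_of_disjoint]
  · congr 1
    ext i
    simp only [Finset.mem_union, Finset.mem_filter]
    constructor
    · rintro ⟨hi, h1, h2⟩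
      by_cases hc : i < o + a
      · exact Or.inl ⟨hi, h1, hc⟩
      · exact Or.inr ⟨hi, by omega⟩
    · rintro (⟨hi, h1, h2⟩ | ⟨hi, h1, h2⟩) <;> exact ⟨hi, by omega⟩
  · rw [Finset.disjoint_left]
    intro i hi hi'
    simp only [Finset.mem_filter] at hi hi'
    omega

lemma mcount_pos (marks : Finset ℕ) {o n : ℕ} (h : 0 < mcount marks o n) :
    ∃ μ ∈ marks, o ≤ μ ∧ μ < o + n := by
  obtain ⟨μ, hμ⟩ := Finset.card_pos.mp h
  simp only [Finset.mem_filter] at hμ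
  exact ⟨μ, hμ.1, hμ.2⟩

/-- The list of mark-counts of consecutive windows of lengths `ns` starting at `o`. -/
def mcounts (marks : Finset ℕ) : ℕ → List ℕ → List ℕ
  | _, [] => []
  | o, n :: ns => mcount marks o n :: mcounts marks (o + n) ns

@[simp] lemma length_mcounts (marks : Finset ℕ) :
    ∀ (o : ℕ) (ns : List ℕ), (mcounts marks o ns).length = ns.length
  | _, [] => rfl
  | o, n :: ns => by simp [mcounts, length_mcounts marks (o + n) ns]

lemma sum_mcounts (marks : Finset ℕ) :
    ∀ (o : ℕ) (ns : List ℕ), (mcounts marks o ns).sum = mcount marks o ns.sum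
  | o, [] => by
    simp only [mcounts, List.sum_nil, mcount]
    exact (Finset.card_eq_zero.mpr (Finset.filter_eq_empty_iff.mpr fun i _ => by omega)).symm
  | o, n :: ns => by
    simp only [mcounts, List.sum_cons, sum_mcounts marks (o + n) ns, mcount_add]

lemma getElem_mcounts (marks : Finset ℕ) :
    ∀ (o : ℕ) (ns : List ℕ) (i : ℕ) (hi : i < ns.length),
      (mcounts marks o ns)[i]'(by simpa using hi) =
        mcount marks (o + (ns.take i).sum) ns[i]
  | o, n :: ns, 0, hi => by simp [mcounts]
  | o, n :: ns, i + 1, hi => by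
    simp only [mcounts, List.getElem_cons_succ, List.take_succ_cons, List.sum_cons]
    rw [getElem_mcounts marks (o + n) ns i (by simpa using hi)]
    ring_nf

/-- A nonempty list of naturals has an index attaining the maximum. -/
lemma exists_argmax : ∀ (L : List ℕ), L ≠ [] →
    ∃ i : ℕ, ∃ hi : i < L.length, ∀ j : ℕ, ∀ hj : j < L.length, L[j] ≤ L[i]
  | [], h => absurd rfl h
  | [a], _ => ⟨0, by simp, by
      intro j hj
      match j with
      | 0 => simp
      | j + 1 => exact absurd hj (by simp)⟩
  | a :: b :: L, _ => by
    obtain ⟨i, hi, hmax⟩ := exists_argmax (b :: L) (by simp)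
    by_cases hab : a ≤ (b :: L)[i]
    · exact ⟨i + 1, by simpa using hi, by
        intro j hj
        match j with
        | 0 => simpa using hab
        | j + 1 => simpa using hmax j (by simpa using hj)⟩
    · refine ⟨0, by simp, ?_⟩
      intro j hj
      match j with
      | 0 => simp
      | j + 1 =>
        simp only [List.getElem_cons_succ, List.getElem_cons_zero]
        exact le_trans (hmax j (by simpa using hj)) (by omega)

lemma sum_le_of_forall_le (L : List ℕ) (b : ℕ)
    (h : ∀ j : ℕ, ∀ hj : j < L.length, L[j] ≤ b) : L.sum ≤ L.length * b := by
  induction L with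
  | nil => simp
  | cons a L ih =>
    simp only [List.sum_cons, List.length_cons]
    have h0 : a ≤ b := h 0 (by simp)
    have := ih (fun j hj => h (j + 1) (by simpa using hj))
    calc a + L.sum ≤ b + L.length * b := by omega
    _ = (L.length + 1) * b := by ring

lemma getElem_le_sum (L : List ℕ) (i : ℕ) (hi : i < L.length) : L[i] ≤ L.sum :=
  List.single_le_sum (by simp) _ (L.getElem_mem hi)

lemma flatten_eq_take_getElem_drop {α : Type*} (L : List (List α)) (i : ℕ)
    (hi : i < L.length) :
    L.flatten = (L.take i).flatten ++ L[i] ++ (L.drop (i + 1)).flatten := by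
  conv_lhs => rw [← List.take_append_drop i L]
  rw [List.drop_eq_getElem_cons hi]
  rw [List.flatten_append, List.flatten_cons, ← List.append_assoc]

variable {g : ContextFreeGrammar T}

/-- Chain of "branch nodes": `CB A o y l` says the subtree rooted at the branch node
labelled `A`, whose yield `y` sits at absolute offset `o`, contains the chain `l` of
further branch nodes below it, each step leaving a mark outside the next element. -/
def CB (marks : Finset ℕ) : g.NT → ℕ → List T → List g.NT → Prop
  | A, _, y, [] => g.Derives [.nonterminal A] (y.map .terminal)
  | A, o, y, B :: l => ∃ x y' z : List T, y = x ++ y' ++ z ∧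
      g.Derives [.nonterminal A]
        (x.map .terminal ++ [.nonterminal B] ++ z.map .terminal) ∧
      (∃ μ ∈ marks, (o ≤ μ ∧ μ < o + x.length) ∨
        (o + x.length + y'.length ≤ μ ∧ μ < o + y.length)) ∧
      CB marks B (o + x.length) y' l

/-- Chain from an arbitrary node: like `CB` but the first step carries no mark. -/
def CC (marks : Finset ℕ) : g.NT → ℕ → List T → List g.NT → Prop
  | A, _, y, [] => g.Derives [.nonterminal A] (y.map .terminal)
  | A, o, y, B :: l => ∃ x y' z : List T, y = x ++ y' ++ z ∧
      g.Derives [.nonterminal A]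
        (x.map .terminal ++ [.nonterminal B] ++ z.map .terminal) ∧
      CB marks B (o + x.length) y' l

lemma CB_yield (marks : Finset ℕ) :
    ∀ (l : List g.NT) (A : g.NT) (o : ℕ) (y : List T), CB marks A o y l →
      g.Derives [.nonterminal A] (y.map .terminal)
  | [], A, o, y, h => h
  | B :: l, A, o, y, h => by
    obtain ⟨x, y', z, rfl, hd, _, hcb⟩ := h
    have h2 := CB_yield marks l B (o + x.length) y' hcb
    refine hd.trans ?_
    have := (h2.append_left (x.map Symbol.terminal)).append_right (z.map Symbol.terminal)
    simpa using this

lemma CB_elem (marks : Finset ℕ) :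
    ∀ (l : List g.NT) (A : g.NT) (o : ℕ) (y : List T), CB marks A o y l →
    ∀ (j : ℕ) (hj : j < l.length),
    ∃ x2 y2 z2 : List T, y = x2 ++ y2 ++ z2 ∧
      g.Derives [.nonterminal A]
        (x2.map .terminal ++ [.nonterminal l[j]] ++ z2.map .terminal) ∧
      CB marks l[j] (o + x2.length) y2 (l.drop (j + 1)) ∧
      (∃ μ ∈ marks, (o ≤ μ ∧ μ < o + x2.length) ∨
        (o + x2.length + y2.length ≤ μ ∧ μ < o + y.length))
  | B :: l, A, o, y, h, 0, hj => by
    obtain ⟨x, y', z, rfl, hd, hm, hcb⟩ := h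
    exact ⟨x, y', z, rfl, hd, hcb, hm⟩
  | B :: l, A, o, y, h, j + 1, hj => by
    obtain ⟨x, y', z, rfl, hd, hm, hcb⟩ := h
    obtain ⟨x2, y2, z2, hy', hd2, hcb2, μ, hμmem, hμ⟩ :=
      CB_elem marks l B (o + x.length) y' hcb j (by simpa using hj)
    refine ⟨x ++ x2, y2, z2 ++ z, by simp only [hy', List.append_assoc], ?_, ?_, ?_⟩
    · refine hd.trans ?_
      have := (hd2.append_left (x.map Symbol.terminal)).append_right (z.map Symbol.terminal)
      simpa using this
    · have : o + x.length + x2.length = o + (x ++ x2).length := by simp; ring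
      rw [← this]
      simpa using hcb2
    · refine ⟨μ, hμmem, ?_⟩
      have hylen : y'.length = x2.length + y2.length + z2.length := by
        rw [hy', List.length_append, List.length_append]
      simp only [List.length_append]
      omega

lemma CC_elem (marks : Finset ℕ) (l : List g.NT) (A : g.NT) (o : ℕ) (y : List T)
    (h : CC marks A o y l) (j : ℕ) (hj : j < l.length) :
    ∃ x2 y2 z2 : List T, y = x2 ++ y2 ++ z2 ∧
      g.Derives [.nonterminal A]
        (x2.map .terminal ++ [.nonterminal l[j]] ++ z2.map .terminal) ∧
      CB marks l[j] (o + x2.length) y2 (l.drop (j + 1)) := by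
  match l, j with
  | B :: l, 0 =>
    obtain ⟨x, y', z, rfl, hd, hcb⟩ := h
    exact ⟨x, y', z, rfl, hd, hcb⟩
  | B :: l, j + 1 =>
    obtain ⟨x, y', z, rfl, hd, hcb⟩ := h
    obtain ⟨x2, y2, z2, hy', hd2, hcb2, _⟩ :=
      CB_elem marks l B (o + x.length) y' hcb j (by simpa using hj)
    refine ⟨x ++ x2, y2, z2 ++ z, by simp only [hy', List.append_assoc], ?_, ?_⟩
    · refine hd.trans ?_
      have := (hd2.append_left (x.map Symbol.terminal)).append_right (z.map Symbol.terminal)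
      simpa using this
    · have : o + x.length + x2.length = o + (x ++ x2).length := by simp; ring
      rw [← this]
      simpa using hcb2

/-- Iterated pumping. -/
lemma pump_iter {A : g.NT} {x z : List T}
    (h : g.Derives [.nonterminal A]
      (x.map .terminal ++ [.nonterminal A] ++ z.map .terminal)) (n : ℕ) :
    g.Derives [.nonterminal A]
      (((List.replicate n x).flatten).map .terminal ++ [.nonterminal A] ++
        ((List.replicate n z).flatten).map .terminal) := by
  induction n with
  | zero => simpa using Derives.refl _
  | succ n ih =>
    refine h.trans ?_
    have h2 := (ih.append_left (x.map Symbol.terminal)).append_right (z.map Symbol.terminal)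
    have he : (List.replicate (n+1) x).flatten = x ++ (List.replicate n x).flatten := by
      simp [List.replicate_succ]
    have he' : (List.replicate (n+1) z).flatten = (List.replicate n z).flatten ++ z := by
      conv_lhs => rw [List.replicate_succ']
      simp
    rw [he, he']
    simp only [List.map_append, List.append_assoc] at h2 ⊢
    exact h2


lemma WF_node_inv {r' : ContextFreeRule T g.NT} {c' : List (PT g)} {s : Symbol T g.NT}
    (h : WF (PT.node r' c') s) :
    s = .nonterminal r'.input ∧ r' ∈ g.rules ∧ List.Forall₂ WF c' r'.output := by
  cases h; exact ⟨rfl, ‹_›, ‹_›⟩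

lemma WF_leaf_inv {t : T} {s : Symbol T g.NT} (h : WF (PT.leaf t : PT g) s) :
    s = .terminal t := by cases h; rfl

lemma forall₂_getElem {α β : Type*} {R : α → β → Prop} :
    ∀ {l₁ : List α} {l₂ : List β}, List.Forall₂ R l₁ l₂ →
    ∀ (i : ℕ) (h1 : i < l₁.length) (h2 : i < l₂.length), R l₁[i] l₂[i]
  | _, _, List.Forall₂.cons h _, 0, _, _ => h
  | _, _, List.Forall₂.cons _ h, i + 1, h1, h2 =>
      forall₂_getElem h i (by simpa using h1) (by simpa using h2)

theorem main_count (marks : Finset ℕ) (M : ℕ) (hM2 : 2 ≤ M)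
    (hMr : ∀ r ∈ g.rules, r.output.length ≤ M) :
    ∀ p : PT g, ∀ (A : g.NT) (o h : ℕ), WF p (.nonterminal A) →
      M ^ h ≤ mcount marks o p.yield.length →
      ∃ l : List g.NT, h ≤ l.length ∧ (∀ B ∈ l, ∃ r ∈ g.rules, r.input = B) ∧
        CC marks A o p.yield l := by
  intro p
  induction p using PT.strongInd with
  | ih p IH =>
    intro A o h hwf hcnt
    match h with
    | 0 =>
      exact ⟨[], by simp, by simp, derives_yield p _ hwf⟩
    | h + 1 =>
      have hS2 : 2 ≤ mcount marks o p.yield.length :=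
        le_trans (le_trans hM2 (Nat.le_self_pow (by omega) M)) hcnt
      cases p with
      | leaf t =>
        have h1 : (PT.leaf t : PT g).yield.length = 1 := by simp
        have h2 := mcount_le marks o (PT.leaf t : PT g).yield.length
        rw [h1] at h2 hS2
        omega
      | node r cc =>
        obtain ⟨hA, hr, hf⟩ := WF_node_inv hwf
        obtain rfl : A = r.input := by
          cases hA with | refl => rfl
        set Y := (PT.node r cc).yield with hY
        set ys : List (List T) := cc.map PT.yield with hys
        set ns : List ℕ := ys.map List.length with hns
        have hYflat : Y = ys.flatten := by rw [hY, PT.yield_node]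
        have hYlen : Y.length = ns.sum := by rw [hYflat, List.length_flatten, hns]
        have hcl : cc.length = r.output.length := hf.length_eq
        have hysl : ys.length = cc.length := by simp [hys]
        have hnsl : ns.length = ys.length := by simp [hns]
        have hcne : cc ≠ [] := by
          rintro rfl
          have : Y.length = 0 := by simp [hYflat, hys]
          have := mcount_le marks o Y.length
          omega
        set mcs : List ℕ := mcounts marks o ns with hmcs
        have hmcsl : mcs.length = ns.length := by simp [hmcs]
        have hmcssum : mcs.sum = mcount marks o Y.length := by
          rw [hmcs, sum_mcounts, hYlen]
        obtain ⟨i, hi, hmax⟩ := exists_argmax mcs (by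
          intro hnil
          have : mcs.length = 0 := by simp [hnil]
          have : cc.length = 0 := by omega
          exact hcne (List.eq_nil_of_length_eq_zero this))
        have hic : i < cc.length := by omega
        have hiys : i < ys.length := by omega
        have hins : i < ns.length := by omega
        have hiout : i < r.output.length := by omega
        -- the chosen child and the decomposition
        obtain ⟨child, hchild0⟩ : ∃ q : PT g, cc[i]'hic = q := ⟨_, rfl⟩
        have hmemc : child ∈ cc := by rw [← hchild0]; exact List.getElem_mem hic
        set pre : List T := (ys.take i).flatten with hpre
        set yi : List T := child.yield with hyi
        set suf : List T := (ys.drop (i + 1)).flatten with hsuf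
        have hyschild : ys[i]'hiys = yi := by
          simp only [hys, List.getElem_map]
          rw [hchild0, hyi]
        have hdecomp : Y = pre ++ yi ++ suf := by
          rw [hYflat, flatten_eq_take_getElem_drop ys i hiys, hyschild]
        have hprelen : pre.length = (ns.take i).sum := by
          rw [hpre, List.length_flatten, hns, List.map_take]
        have hyilen : yi.length = ns[i]'hins := by
          simp only [hns, List.getElem_map]
          rw [hyschild]
        have hm_eq : mcs[i]'hi = mcount marks (o + pre.length) yi.length := by
          simp only [hmcs]
          rw [getElem_mcounts marks o ns i hins, hprelen, hyilen]
        set m : ℕ := mcount marks (o + pre.length) yi.length with hm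
        -- bounding: the max child has many marks
        have hsumle : mcs.sum ≤ mcs.length * mcs[i]'hi := sum_le_of_forall_le mcs _ hmax
        have houtM : r.output.length ≤ M := hMr r hr
        have hMm : M ^ h ≤ m := by
          have h1 : M ^ (h + 1) ≤ mcs.length * mcs[i]'hi := by
            rw [hmcssum] at hsumle
            exact le_trans hcnt hsumle
          have h2 : mcs.length * (mcs[i]'hi) ≤ M * m := by
            rw [hm_eq]
            have : mcs.length ≤ M := by omega
            exact Nat.mul_le_mul_right _ this
          have h3 : M * M ^ h ≤ M * m := by
            calc M * M ^ h = M ^ (h + 1) := by ring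
            _ ≤ M * m := le_trans h1 h2
          exact Nat.le_of_mul_le_mul_left h3 (by omega)
        have hmS : m ≤ mcount marks o Y.length := by
          rw [← hmcssum, ← hm_eq]; exact getElem_le_sum mcs i hi
        -- splitting the total count
        have hYlen3 : Y.length = pre.length + yi.length + suf.length := by
          rw [hdecomp]; simp only [List.length_append]
        have hsplit : mcount marks o Y.length =
            mcount marks o pre.length + m + mcount marks (o + pre.length + yi.length) suf.length := by
          rw [hYlen3, show pre.length + yi.length + suf.length
              = pre.length + (yi.length + suf.length) from by omega,
            mcount_add, mcount_add, ← hm, Nat.add_assoc]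
          omega
        -- context derivation
        have hwfc : WF child (r.output[i]'hiout) := by
          rw [← hchild0]; exact forall₂_getElem hf i hic hiout
        have hctx : g.Derives [Symbol.nonterminal r.input]
            (pre.map .terminal ++ [r.output[i]'hiout] ++ suf.map .terminal) := by
          have hstep : g.Derives [Symbol.nonterminal r.input] r.output :=
            Produces.single ⟨r, hr, ContextFreeRule.Rewrites.input_output⟩
          refine hstep.trans ?_
          have hod : r.output = r.output.take i ++ [r.output[i]'hiout] ++ r.output.drop (i + 1) := by
            conv_lhs => rw [← List.take_append_drop i r.output]
            rw [List.drop_eq_getElem_cons hiout]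
            simp
          have d1 : g.Derives (r.output.take i) (pre.map .terminal) := by
            have := derives_yield_list (List.forall₂_take i hf)
            rwa [List.map_take, ← hys, ← hpre] at this
          have d3 : g.Derives (r.output.drop (i + 1)) (suf.map .terminal) := by
            have := derives_yield_list (List.forall₂_drop (i + 1) hf)
            rwa [List.map_drop, ← hys, ← hsuf] at this
          conv_lhs => rw [hod]
          have e1 := (d1.append_right ([r.output[i]'hiout] ++ r.output.drop (i + 1)))
          have e2 := (d3.append_left (pre.map Symbol.terminal ++ [r.output[i]'hiout]))
          simp only [List.append_assoc] at e1 e2 ⊢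
          exact e1.trans e2
        by_cases hcase : m = mcount marks o Y.length
        · -- all marks inside the chosen child; recurse with the same h+1
          cases hch : child with
          | leaf t =>
            exfalso
            have h1 : yi.length ≤ 1 := by rw [hyi, hch]; simp
            have := mcount_le marks (o + pre.length) yi.length
            omega
          | node r' c' =>
            have hwfc' : WF (PT.node r' c') (r.output[i]'hiout) := by rw [← hch]; exact hwfc
            obtain ⟨hBout, hr', hf'⟩ := WF_node_inv hwfc'
            have hsz : sizeOf (PT.node r' c') < sizeOf (PT.node r cc) := by
              rw [← hch]; exact PT.sizeOf_lt_of_mem hmemc r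
            have hcnt' : M ^ (h + 1) ≤
                mcount marks (o + pre.length) (PT.node r' c').yield.length := by
              rw [← hch, ← hyi]
              omega
            obtain ⟨l, hl, hmem, hcc⟩ := IH (PT.node r' c') hsz r'.input (o + pre.length)
              (h + 1) (WF.node hr' hf') hcnt'
            have hccyi : CC marks r'.input (o + pre.length) yi l := by
              rw [hyi, hch]; exact hcc
            match l, hl with
            | [], hl => exact absurd hl (by simp)
            | C :: rest, hl =>
              obtain ⟨x', y', z', hyieq, hdB, hcb⟩ := hccyi
              refine ⟨C :: rest, hl, hmem, ?_⟩
              refine ⟨pre ++ x', y', z' ++ suf, ?_, ?_, ?_⟩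
              · rw [hdecomp, hyieq]; simp [List.append_assoc]
              · refine hctx.trans ?_
                rw [hBout]
                have := (hdB.append_left (pre.map Symbol.terminal)).append_right (suf.map Symbol.terminal)
                simp only [List.map_append, List.append_assoc] at this ⊢
                exact this
              · have heq : o + (pre ++ x').length = o + pre.length + x'.length := by
                  simp [Nat.add_assoc]
                rw [heq]
                exact hcb
        · -- marks outside the chosen child exist
          have hmark : ∃ μ ∈ marks,
              (o ≤ μ ∧ μ < o + pre.length) ∨
              (o + pre.length + yi.length ≤ μ ∧ μ < o + Y.length) := by
            by_cases h0 : 0 < mcount marks o pre.length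
            · obtain ⟨μ, hμm, hμ⟩ := mcount_pos marks h0
              exact ⟨μ, hμm, Or.inl hμ⟩
            · have : 0 < mcount marks (o + pre.length + yi.length) suf.length := by omega
              obtain ⟨μ, hμm, hμ⟩ := mcount_pos marks this
              refine ⟨μ, hμm, Or.inr ⟨hμ.1, ?_⟩⟩
              omega
          -- helper to build the singleton chain
          have hsingle : ∃ l : List g.NT, 1 ≤ l.length ∧
              (∀ B ∈ l, ∃ r' ∈ g.rules, r'.input = B) ∧
              CC marks r.input o Y l := by
            refine ⟨[r.input], by simp, ?_, ?_⟩
            · intro B hB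
              simp only [List.mem_singleton] at hB
              subst hB
              exact ⟨r, hr, rfl⟩
            refine ⟨[], Y, [], by simp, by simpa using Derives.refl _, ?_⟩
            show CB marks r.input (o + (0:ℕ)) Y []
            exact derives_yield _ _ hwf
          cases hch : child with
          | leaf t =>
            have h1 : yi.length ≤ 1 := by rw [hyi, hch]; simp
            have hm1 : m ≤ 1 := le_trans (mcount_le _ _ _) h1
            have hh0 : h = 0 := by
              by_contra hne
              have : 2 ≤ M ^ h := le_trans hM2 (Nat.le_self_pow hne M)
              omega
            obtain ⟨l, h1', h2', h3'⟩ := hsingle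
            exact ⟨l, by omega, h2', h3'⟩
          | node r' c' =>
            have hwfc' : WF (PT.node r' c') (r.output[i]'hiout) := by rw [← hch]; exact hwfc
            obtain ⟨hBout, hr', hf'⟩ := WF_node_inv hwfc'
            have hsz : sizeOf (PT.node r' c') < sizeOf (PT.node r cc) := by
              rw [← hch]; exact PT.sizeOf_lt_of_mem hmemc r
            have hcnt' : M ^ h ≤
                mcount marks (o + pre.length) (PT.node r' c').yield.length := by
              rw [← hch, ← hyi]
              omega
            obtain ⟨l, hl, hmem, hcc⟩ := IH (PT.node r' c') hsz r'.input (o + pre.length)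
              h (WF.node hr' hf') hcnt'
            have hccyi : CC marks r'.input (o + pre.length) yi l := by
              rw [hyi, hch]; exact hcc
            match l, hl with
            | [], hl =>
              obtain ⟨l', h1', h2', h3'⟩ := hsingle
              have hl0 : h = 0 := by simpa using hl
              exact ⟨l', by omega, h2', h3'⟩
            | C :: rest, hl =>
              obtain ⟨x', y', z', hyieq, hdB, hcb⟩ := hccyi
              have hll : h ≤ rest.length + 1 := by simpa using hl
              refine ⟨r.input :: C :: rest, by simp only [List.length_cons]; omega, ?_, ?_⟩
              · intro B hB
                rcases List.mem_cons.mp hB with rfl | hB'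
                · exact ⟨r, hr, rfl⟩
                · exact hmem B hB'
              · refine ⟨[], Y, [], by simp, by simpa using Derives.refl _, ?_⟩
                show CB marks r.input (o + (0:ℕ)) Y (C :: rest)
                refine ⟨pre ++ x', y', z' ++ suf, ?_, ?_, ?_, ?_⟩
                · rw [hdecomp, hyieq]; simp [List.append_assoc]
                · refine hctx.trans ?_
                  rw [hBout]
                  have := (hdB.append_left (pre.map Symbol.terminal)).append_right (suf.map Symbol.terminal)
                  simp only [List.map_append, List.append_assoc] at this ⊢
                  exact this
                · obtain ⟨μ, hμm, hμ⟩ := hmark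
                  refine ⟨μ, hμm, ?_⟩
                  have hyl : yi.length = x'.length + y'.length + z'.length := by
                    rw [hyieq, List.length_append, List.length_append]
                  simp only [List.length_append]
                  omega
                · have heq : o + (0:ℕ) + (pre ++ x').length = o + pre.length + x'.length := by
                    simp [Nat.add_assoc]
                  rw [heq]
                  exact hcb
end OgdenAux

/-- Weak version of Ogden's lemma: for every context-free language `L` there exists
`N` such that for every word `w ∈ L` and every set of marked positions of `w` of
cardinality at least `N`, there is a decomposition `w = w1 w2 w3 w4 w5` such that
`w2 w4` contains at least one marked position and for all `n`,
`w1 w2^n w3 w4^n w5 ∈ L`. -/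
theorem ogden_weak {T : Type*} {L : Language T} (hL : L.IsContextFree) :
    ∃ N : ℕ, ∀ w ∈ L, ∀ marks : Finset ℕ,
      (∀ i ∈ marks, i < w.length) → N ≤ marks.card →
      ∃ w1 w2 w3 w4 w5 : List T,
        w = w1 ++ w2 ++ w3 ++ w4 ++ w5 ∧
        (∃ i ∈ marks,
          (w1.length ≤ i ∧ i < w1.length + w2.length) ∨
          (w1.length + w2.length + w3.length ≤ i ∧
            i < w1.length + w2.length + w3.length + w4.length)) ∧
        ∀ n : ℕ, (w1 ++ (List.flatten (List.replicate n w2)) ++ w3 ++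
            (List.flatten (List.replicate n w4)) ++ w5) ∈ L := by
  classical
  obtain ⟨g, rfl⟩ := hL
  open OgdenAux in
  set M : ℕ := max 2 (g.rules.sup fun r => r.output.length) with hM
  set K : ℕ := (g.rules.image ContextFreeRule.input).card with hK
  refine ⟨M ^ (K + 1), ?_⟩
  intro w hw marks hmarks hcard
  rw [ContextFreeGrammar.mem_language_iff] at hw
  obtain ⟨ps, hf, hy⟩ := OgdenAux.trees_of_derives _ w hw
  cases hf with
  | @cons p x ps' ss' hwf htl =>
    cases htl
    have hyp : p.yield = w := by simpa using hy
    have hcnt : M ^ (K + 1) ≤ OgdenAux.mcount marks 0 p.yield.length := by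
      rw [hyp]
      have : OgdenAux.mcount marks 0 w.length = marks.card := by
        unfold OgdenAux.mcount
        rw [Finset.filter_true_of_mem]
        intro i hi
        exact ⟨Nat.zero_le i, by have := hmarks i hi; omega⟩
      omega
    obtain ⟨l, hlen, hmem, hcc⟩ := OgdenAux.main_count marks M (le_max_left _ _)
      (fun r hr => le_trans (Finset.le_sup (f := fun r => r.output.length) hr)
        (le_max_right 2 _))
      p g.initial 0 (K + 1) hwf hcnt
    rw [hyp] at hcc
    -- pigeonhole: two equal nonterminals in the chain
    have hndp : ¬ l.Nodup := by
      intro hnd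
      have hsub : l.toFinset ⊆ g.rules.image ContextFreeRule.input := by
        intro x hx
        rw [List.mem_toFinset] at hx
        obtain ⟨r, hr, hrx⟩ := hmem x hx
        exact Finset.mem_image.mpr ⟨r, hr, hrx⟩
      have h1 := Finset.card_le_card hsub
      rw [List.toFinset_card_of_nodup hnd] at h1
      omega
    rw [List.Nodup, List.pairwise_iff_getElem] at hndp
    push_neg at hndp
    obtain ⟨i, j, hi, hj, hij, hEq⟩ := hndp
    -- extract the pumping decomposition
    obtain ⟨a, y, b, hw_eq, hdInit, hcbi⟩ :=
      OgdenAux.CC_elem marks l g.initial 0 w hcc i hi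
    have hj' : j - (i + 1) < (l.drop (i + 1)).length := by
      rw [List.length_drop]; omega
    obtain ⟨x2, y2, z2, hy_eq, hdA, hcb2, μ, hμm, hμ⟩ :=
      OgdenAux.CB_elem marks (l.drop (i + 1)) (l[i]'hi) (0 + a.length) y hcbi
        (j - (i + 1)) hj'
    have hB : (l.drop (i + 1))[j - (i + 1)]'hj' = l[i]'hi := by
      rw [List.getElem_drop]
      rw [hEq]
      congr 1
      omega
    rw [hB] at hdA hcb2
    have hyB := OgdenAux.CB_yield marks _ _ _ _ hcb2
    refine ⟨a, x2, y2, z2, b, ?_, ?_, ?_⟩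
    · rw [hw_eq, hy_eq]
      simp only [List.append_assoc]
    · refine ⟨μ, hμm, ?_⟩
      have hyl : y.length = x2.length + y2.length + z2.length := by
        rw [hy_eq, List.length_append, List.length_append]
      omega
    · intro n
      rw [ContextFreeGrammar.mem_language_iff]
      have pump := OgdenAux.pump_iter hdA n
      have d1 := (pump.append_left (a.map Symbol.terminal)).append_right
        (b.map Symbol.terminal)
      have d2 := (hyB.append_left
          (a.map Symbol.terminal ++ ((List.replicate n x2).flatten).map Symbol.terminal)).append_right
        (((List.replicate n z2).flatten).map Symbol.terminal ++ b.map Symbol.terminal)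
      have dfin := (hdInit.trans d1).trans (by
        simp only [List.append_assoc] at d2 ⊢
        exact d2)
      simp only [List.map_append, List.append_assoc] at dfin ⊢
      exact dfin
end

section
/- If (A, ≤) is a well quasi-order, then the set of finite multisets over A, ordered by the multiset embedding order (M ≤ M' iff there is an injection from M into M' mapping each element to a larger-or-equal element), is a well quasi-order. -/
/-- A well quasi-order: every infinite sequence contains an increasing pair. -/
def IsWqo {α : Type*} (le : α → α → Prop) : Prop :=
  ∀ f : ℕ → α, ∃ i j : ℕ, i < j ∧ le (f i) (f j)

/-- The multiset embedding order induced by `r`: `M ≤ M'` iff there is a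
sub-multiset `N` of `M'` and a bijective matching of `M` with `N` relating each
element of `M` to a larger-or-equal element of `N`. -/
def MultisetEmb {α : Type*} (r : α → α → Prop) (M M' : Multiset α) : Prop :=
  ∃ N : Multiset α, N ≤ M' ∧ Multiset.Rel r M N

open Set Filter in
private lemma ultra_subseq {U : Ultrafilter ℕ}
    (hcof : ∀ s : Set ℕ, sᶜ.Finite → s ∈ U) {T : Set ℕ}
    (hT : T ∈ U) (S : ℕ → Set ℕ) (hS : ∀ i ∈ T, S i ∈ U) :
    ∃ g : ℕ → ℕ, StrictMono g ∧ ∀ m n, m < n → g n ∈ S (g m) := by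
  classical
  let Good : ℕ → Set ℕ → Prop := fun k B => B ∈ U ∧ B ⊆ T ∧ ∀ j ∈ B, k < j ∧ j ∈ S k
  have hmk : ∀ (k : ℕ) (B : Set ℕ), B ∈ U → B ⊆ T → k ∈ T →
      Good k (B ∩ S k ∩ Set.Ioi k) ∧ (B ∩ S k ∩ Set.Ioi k) ⊆ B := by
    intro k B hB hBT hkT
    refine ⟨⟨?_, fun j hj => hBT hj.1.1, fun j hj => ⟨hj.2, hj.1.2⟩⟩, fun j hj => hj.1.1⟩
    exact inter_mem (inter_mem hB (hS k hkT)) (hcof _ (by simp [Set.finite_Iic]))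
  have hstep : ∀ k B, Good k B → ∃ k' B', Good k' B' ∧ k' ∈ B ∧ B' ⊆ B := by
    rintro k B ⟨hB, hBT, _⟩
    obtain ⟨k', hk'⟩ := Ultrafilter.nonempty_of_mem hB
    obtain ⟨h1, h2⟩ := hmk k' B hB hBT (hBT hk')
    exact ⟨k', _, h1, hk', h2⟩
  have hinit : ∃ k B, Good k B := by
    obtain ⟨k, hk⟩ := Ultrafilter.nonempty_of_mem hT
    exact ⟨k, _, (hmk k T hT le_rfl hk).1⟩
  choose k' B' hGood' hmem' hsub' using hstep
  obtain ⟨k0, B0, hG0⟩ := hinit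
  let seq : ℕ → Σ' (k : ℕ) (B : Set ℕ), Good k B := fun n =>
    Nat.rec ⟨k0, B0, hG0⟩ (fun _ p => ⟨k' p.1 p.2.1 p.2.2, B' p.1 p.2.1 p.2.2, hGood' _ _ _⟩) n
  let g : ℕ → ℕ := fun n => (seq n).1
  have hlink : ∀ n, g (n + 1) ∈ (seq n).2.1 := fun n => hmem' _ _ _
  have hchain : ∀ a b, a ≤ b → (seq b).2.1 ⊆ (seq a).2.1 := by
    intro a b hab
    induction hab with
    | refl => exact fun _ h => h
    | step _ ih => exact fun x hx => ih (hsub' _ _ _ hx)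
  have hmemB : ∀ m n, m < n → g n ∈ (seq m).2.1 := by
    intro m n h
    obtain ⟨p, rfl⟩ : ∃ p, n = p + 1 := ⟨n - 1, by omega⟩
    exact hchain m p (by omega) (hlink p)
  refine ⟨g, strictMono_nat_of_lt_succ fun n =>
      ((seq n).2.2.2.2 _ (hmemB n (n + 1) n.lt_succ_self)).1,
    fun m n h => ((seq m).2.2.2.2 _ (hmemB m n h)).2⟩

open Filter in
private lemma exists_r_subseq {α : Type*} (r : α → α → Prop) (hr : IsWqo r) (f : ℕ → α) :
    ∃ g : ℕ → ℕ, StrictMono g ∧ ∀ m n, m < n → r (f (g m)) (f (g n)) := by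
  classical
  let U := hyperfilter ℕ
  have hcof : ∀ s : Set ℕ, sᶜ.Finite → s ∈ U := fun s hs =>
    hyperfilter_le_cofinite (mem_cofinite.mpr hs)
  let A : ℕ → Set ℕ := fun i => {j | r (f i) (f j)}
  by_cases hG : {i | A i ∈ U} ∈ U
  · obtain ⟨g, hg1, hg2⟩ := ultra_subseq hcof hG A fun i hi => hi
    exact ⟨g, hg1, fun m n h => hg2 m n h⟩
  · have hG' : {i | A i ∈ U}ᶜ ∈ U := Ultrafilter.compl_mem_iff_notMem.mpr hG
    obtain ⟨g, hg1, hg2⟩ := ultra_subseq hcof hG' (fun i => (A i)ᶜ)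
      fun i hi => Ultrafilter.compl_mem_iff_notMem.mpr hi
    obtain ⟨m, n, h, hrr⟩ := hr fun n => f (g n)
    exact absurd hrr (hg2 m n h)

private lemma sublistForall₂_of_sublist {α : Type*} {r : α → α → Prop}
    {l₁ l₂ l₃ : List α} (h : List.SublistForall₂ r l₁ l₂) (h' : l₂.Sublist l₃) :
    List.SublistForall₂ r l₁ l₃ := by
  rw [List.sublistForall₂_iff] at h ⊢
  obtain ⟨l, h1, h2⟩ := h
  exact ⟨l, h1, h2.trans h'⟩

open Set Set.PartiallyWellOrderedOn in
/-- Higman's lemma for an arbitrary almost-full relation (no transitivity needed). -/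
private lemma higman_wqo {α : Type*} (r : α → α → Prop) (hr : IsWqo r) :
    (Set.univ : Set (List α)).PartiallyWellOrderedOn (List.SublistForall₂ r) := by
  rcases isEmpty_or_nonempty α with hemp | _
  · rw [partiallyWellOrderedOn_iff_exists_lt]
    intro f _
    have hfn : ∀ n, f n = [] := fun n =>
      List.eq_nil_iff_forall_not_mem.mpr fun a _ => (hemp.false a).elim
    exact ⟨0, 1, Nat.zero_lt_one, by rw [hfn 0]; exact List.SublistForall₂.nil⟩
  inhabit α
  rw [iff_not_exists_isMinBadSeq List.length]
  rintro ⟨f, hf1, hf2⟩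
  have hnil : ∀ n, f n ≠ List.nil := fun n con =>
    hf1.2 n n.succ n.lt_succ_self (con.symm ▸ List.SublistForall₂.nil)
  obtain ⟨g0, hg0mono, hg⟩ := exists_r_subseq r hr fun n => (f n).headI
  let g : ℕ ↪o ℕ := OrderEmbedding.ofStrictMono g0 hg0mono
  have hf' :=
    hf2 (g 0) (fun n => if n < g 0 then f n else List.tail (f (g (n - g 0))))
      (fun m hm => (if_pos hm).symm) ?_
  swap
  · simp only [if_neg (lt_irrefl (g 0)), Nat.sub_self]
    rw [List.length_tail, ← Nat.pred_eq_sub_one]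
    exact Nat.pred_lt fun con => hnil _ (List.length_eq_zero_iff.1 con)
  rw [IsBadSeq] at hf'
  push_neg at hf'
  obtain ⟨m, n, mn, hmn⟩ := hf' fun n => mem_univ _
  by_cases hn : n < g 0
  · apply hf1.2 m n mn
    rwa [if_pos hn, if_pos (mn.trans hn)] at hmn
  · obtain ⟨n', rfl⟩ := Nat.exists_eq_add_of_le (not_lt.1 hn)
    rw [if_neg hn, add_comm (g 0) n', Nat.add_sub_cancel_right] at hmn
    split_ifs at hmn with hm
    · apply hf1.2 m (g n') (lt_of_lt_of_le hm (g.monotone n'.zero_le))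
      exact sublistForall₂_of_sublist hmn (List.tail_sublist _)
    · rw [← Nat.sub_lt_iff_lt_add' (le_of_not_gt hm)] at mn
      apply hf1.2 _ _ (g.lt_iff_lt.2 mn)
      rw [← List.cons_head!_tail (hnil (g (m - g 0))), ← List.cons_head!_tail (hnil (g n'))]
      exact List.SublistForall₂.cons (hg _ _ mn) hmn

private lemma rel_of_forall₂ {α : Type*} {r : α → α → Prop} {l₁ l₂ : List α}
    (h : List.Forall₂ r l₁ l₂) : Multiset.Rel r ↑l₁ ↑l₂ := by
  induction h with
  | nil => exact Multiset.Rel.zero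
  | cons h _ ih => simpa using Multiset.Rel.cons h ih

/-- If `(A, ≤)` is a well quasi-order, then finite multisets over `A` ordered by
the multiset embedding order form a well quasi-order. -/
theorem multiset_embedding_wqo {α : Type*} (r : α → α → Prop)
    (hr : IsWqo r) : IsWqo (MultisetEmb r) := by
  have hlists := higman_wqo r hr
  intro f
  obtain ⟨i, j, hij, hsub⟩ := Set.partiallyWellOrderedOn_iff_exists_lt.mp hlists (fun n => (f n).toList) fun n => Set.mem_univ _
  rw [List.sublistForall₂_iff] at hsub
  obtain ⟨l, hrel, hl⟩ := hsub
  refine ⟨i, j, hij, ⟨(l : Multiset α), ?_, ?_⟩⟩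
  · calc (l : Multiset α) ≤ ((f j).toList : Multiset α) := (hl.subperm : _ ≤ _)
      _ = f j := (f j).coe_toList
  · rw [show f i = ((f i).toList : Multiset α) from ((f i).coe_toList).symm]
    exact rel_of_forall₂ hrel
end

section
/- For a Petri net, a marking m0 admits an infinite firing sequence if and only if there exist markings m1, m2 with m0 →* m1 →+ m2 and m1 ≤ m2. -/
/-- One firing step of a Petri net `(P, T, W⁻, W⁺)`. -/
def Step {P T : Type} (Wminus Wplus : P → T → ℕ) (m m' : P → ℕ) : Prop :=
  ∃ t : T, (∀ p, Wminus p t ≤ m p) ∧ m' = fun p => m p - Wminus p t + Wplus p t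

/-- Firing is strongly compatible (monotone): we can shift a step by any `d`. -/
lemma Step.add {P T : Type} {Wminus Wplus : P → T → ℕ} {m m' : P → ℕ}
    (h : Step Wminus Wplus m m') (d : P → ℕ) :
    Step Wminus Wplus (fun p => m p + d p) (fun p => m' p + d p) := by
  obtain ⟨t, hle, heq⟩ := h
  refine ⟨t, fun p => le_trans (hle p) (Nat.le_add_right _ _), ?_⟩
  funext p
  have := hle p
  rw [heq]
  simp only
  omega

/-- Extract a finite chain of markings from a `TransGen`. -/
lemma chain_of_transGen {α : Type*} {r : α → α → Prop} {a b : α}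
    (h : Relation.TransGen r a b) :
    ∃ k, ∃ c : ℕ → α, 0 < k ∧ c 0 = a ∧ c k = b ∧ ∀ i < k, r (c i) (c (i + 1)) := by
  induction h with
  | single hab =>
    rename_i b'
    refine ⟨1, fun n => if n = 0 then a else b', one_pos, by simp, by simp, ?_⟩
    intro i hi
    interval_cases i
    simpa using hab
  | tail _ hbc ih =>
    obtain ⟨k, c, hk, hc0, hck, hstep⟩ := ih
    rename_i b' c' _
    refine ⟨k + 1, fun n => if n < k + 1 then c n else c', by omega, ?_, by simp, ?_⟩
    · simp [hk, hc0]
    · intro i hi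
      rcases Nat.lt_or_ge i k with hik | hik
      · have h1 : i < k + 1 := by omega
        have h2 : i + 1 < k + 1 := by omega
        simpa [h1, h2] using hstep i hik
      · have hik' : i = k := by omega
        subst hik'
        simpa [hck] using hbc

/-- Prepend a reachable prefix to an infinite firing sequence. -/
lemma infseq_prepend {P T : Type} {Wminus Wplus : P → T → ℕ} {m0 m1 : P → ℕ}
    (h : Relation.ReflTransGen (Step Wminus Wplus) m0 m1)
    (hf : ∃ f : ℕ → (P → ℕ), f 0 = m1 ∧ ∀ i, Step Wminus Wplus (f i) (f (i + 1))) :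
    ∃ f : ℕ → (P → ℕ), f 0 = m0 ∧ ∀ i, Step Wminus Wplus (f i) (f (i + 1)) := by
  induction h using Relation.ReflTransGen.head_induction_on with
  | refl => exact hf
  | head hstep _ ih =>
    obtain ⟨f, hf0, hfs⟩ := ih
    rename_i a c _
    refine ⟨fun n => if n = 0 then a else f (n - 1), by simp, ?_⟩
    intro i
    cases i with
    | zero => simpa [hf0] using hstep
    | succ j => simpa using hfs j

/-- A Petri net admits an infinite firing sequence from `m0` iff there are
markings `m1 ≤ m2` with `m0 →* m1 →⁺ m2`. -/
theorem infinite_sequence_iff_increasing_pair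
    {P T : Type} [Fintype P] [Fintype T] (Wminus Wplus : P → T → ℕ) (m0 : P → ℕ) :
    (∃ f : ℕ → (P → ℕ), f 0 = m0 ∧ ∀ i, Step Wminus Wplus (f i) (f (i + 1))) ↔
    (∃ m1 m2 : P → ℕ, Relation.ReflTransGen (Step Wminus Wplus) m0 m1 ∧
      Relation.TransGen (Step Wminus Wplus) m1 m2 ∧ ∀ p, m1 p ≤ m2 p) := by
  constructor
  · rintro ⟨f, hf0, hfs⟩
    -- Dickson's lemma
    obtain ⟨i, j, hij, hle⟩ :=
      (wellQuasiOrdered_le (α := P → ℕ)) f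
    have rtg : ∀ a n, Relation.ReflTransGen (Step Wminus Wplus) (f a) (f (a + n)) := by
      intro a n
      induction n with
      | zero => exact Relation.ReflTransGen.refl
      | succ k ih => exact ih.tail (hfs (a + k))
    refine ⟨f i, f j, ?_, ?_, fun p => hle p⟩
    · have := rtg 0 i
      rwa [hf0, Nat.zero_add] at this
    · have h1 : Relation.TransGen (Step Wminus Wplus) (f i) (f (i + 1)) :=
        Relation.TransGen.single (hfs i)
      have h2 := rtg (i + 1) (j - (i + 1))
      rw [Nat.add_sub_cancel' (by omega : i + 1 ≤ j)] at h2
      exact h1.trans_left h2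
  · rintro ⟨m1, m2, hreach, htrans, hle⟩
    obtain ⟨k, c, hk, hc0, hck, hstep⟩ := chain_of_transGen htrans
    set d : P → ℕ := fun p => m2 p - m1 p with hd
    -- the infinite sequence cycling through the chain, shifted up each round
    refine infseq_prepend hreach
      ⟨fun n => fun p => c (n % k) p + (n / k) * d p, ?_, ?_⟩
    · funext p
      simp [Nat.zero_mod, Nat.zero_div, hc0]
    · intro n
      have hmod : n % k < k := Nat.mod_lt _ hk
      have hdm : k * (n / k) + n % k = n := Nat.div_add_mod n k
      rcases Nat.lt_or_ge (n % k + 1) k with hlt | hge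
      · -- interior step
        have h1 : (n + 1) % k = n % k + 1 := by
          conv_lhs => rw [← hdm]
          rw [Nat.add_assoc, Nat.mul_add_mod]
          exact Nat.mod_eq_of_lt hlt
        have h2 : (n + 1) / k = n / k := by
          conv_lhs => rw [← hdm]
          rw [Nat.add_assoc, Nat.mul_add_div hk, Nat.div_eq_of_lt hlt, Nat.add_zero]
        simp only [h1, h2]
        exact (hstep _ hmod).add _
      · -- wrap-around step
        have hk1 : n % k + 1 = k := by omega
        have hn1 : n + 1 = (n / k + 1) * k := by
          rw [Nat.add_mul, Nat.one_mul, Nat.mul_comm (n / k) k]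
          omega
        have h1 : (n + 1) % k = 0 := by rw [hn1, Nat.mul_mod_left]
        have h2 : (n + 1) / k = n / k + 1 := by
          rw [hn1, Nat.mul_div_cancel _ hk]
        simp only [h1, h2]
        have hck' : c (n % k + 1) = m2 := by rw [hk1, hck]
        have key : (fun p => c 0 p + (n / k + 1) * d p)
            = fun p => c (n % k + 1) p + n / k * d p := by
          funext p
          rw [hc0, hck']
          simp only [hd]
          have hle' := hle p
          set D := m2 p - m1 p with hD
          have h3 : m1 p + D = m2 p := by omega
          rw [← h3]
          ring
        rw [key]
        exact (hstep _ hmod).add _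
end

section
/- For a Petri net, the reachability set from m0 is infinite if and only if there exist markings m1, m2 with m0 →* m1 →+ m2, m1 ≤ m2 and m1 ≠ m2 (Karp–Miller boundedness characterization). -/
namespace KarpMillerAux

open Relation Set

variable {P T : Type} [Fintype P] [Fintype T] (Wminus Wplus : P → T → ℕ)

/-- Monotonicity: a step can be fired from a larger marking, with the same increment. -/
lemma step_add {m m' d : P → ℕ} (h : Step Wminus Wplus m m') :
    Step Wminus Wplus (fun p => m p + d p) (fun p => m' p + d p) := by
  obtain ⟨t, ht, rfl⟩ := h
  refine ⟨t, fun p => le_trans (ht p) (Nat.le_add_right _ _), ?_⟩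
  funext p
  have := ht p
  simp only []
  omega

lemma transGen_add {m m' d : P → ℕ} (h : TransGen (Step Wminus Wplus) m m') :
    TransGen (Step Wminus Wplus) (fun p => m p + d p) (fun p => m' p + d p) := by
  induction h with
  | single h => exact TransGen.single (step_add _ _ h)
  | tail _ h ih => exact TransGen.tail ih (step_add _ _ h)

/-- A marking has only finitely many successors. -/
lemma succ_finite (m : P → ℕ) : {m' | Step Wminus Wplus m m'}.Finite := by
  apply (Set.finite_range (fun t : T => fun p => m p - Wminus p t + Wplus p t)).subset
  rintro m' ⟨t, -, rfl⟩
  exact ⟨t, rfl⟩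

/-- If the reach set of `m` is infinite, the set of reachable markings with
infinite reach set is itself infinite. -/
lemma good_infinite {m : P → ℕ}
    (hm : {x | ReflTransGen (Step Wminus Wplus) m x}.Infinite) :
    {x | ReflTransGen (Step Wminus Wplus) m x ∧
      {y | ReflTransGen (Step Wminus Wplus) x y}.Infinite}.Infinite := by
  by_contra hG
  rw [Set.not_infinite] at hG
  set G := {x | ReflTransGen (Step Wminus Wplus) m x ∧
      {y | ReflTransGen (Step Wminus Wplus) x y}.Infinite} with hGdef
  set B := ⋃ g ∈ G, {b | Step Wminus Wplus g b ∧
      ¬ {y | ReflTransGen (Step Wminus Wplus) b y}.Infinite} with hBdef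
  have hBfin : B.Finite := hG.biUnion fun g _ => (succ_finite Wminus Wplus g).subset
    (fun b hb => hb.1)
  have hsub : {x | ReflTransGen (Step Wminus Wplus) m x} ⊆
      G ∪ ⋃ b ∈ B, {y | ReflTransGen (Step Wminus Wplus) b y} := by
    intro x hx
    induction hx with
    | refl => exact Or.inl ⟨ReflTransGen.refl, hm⟩
    | @tail c x hmc hcx ih =>
      rcases ih with hc | hc
      · by_cases hgood : {y | ReflTransGen (Step Wminus Wplus) x y}.Infinite
        · exact Or.inl ⟨hmc.tail hcx, hgood⟩
        · refine Or.inr (Set.mem_biUnion ?_ (ReflTransGen.refl))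
          exact Set.mem_biUnion hc ⟨hcx, hgood⟩
      · obtain ⟨b, hb, hcb⟩ := Set.mem_iUnion₂.mp hc
        exact Or.inr (Set.mem_biUnion hb (ReflTransGen.tail hcb hcx))
  have hfin : {x | ReflTransGen (Step Wminus Wplus) m x}.Finite := by
    refine Set.Finite.subset (hG.union (hBfin.biUnion fun b hb => ?_)) hsub
    obtain ⟨g, hg, hstep, hbad⟩ := Set.mem_iUnion₂.mp hb
    exact Set.not_infinite.mp hbad
  exact hm hfin

/-- From a marking of infinite reach, one can reach (in at least one step)
a fresh marking of infinite reach, avoiding any finite set. -/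
lemma fresh {m : P → ℕ}
    (hm : {x | ReflTransGen (Step Wminus Wplus) m x}.Infinite)
    (F : Set (P → ℕ)) (hF : F.Finite) :
    ∃ m', TransGen (Step Wminus Wplus) m m' ∧
      {y | ReflTransGen (Step Wminus Wplus) m' y}.Infinite ∧ m' ∉ F := by
  have hG := good_infinite Wminus Wplus hm
  obtain ⟨m', hm', hnot⟩ := (hG.diff (hF.union (Set.finite_singleton m))).nonempty
  rcases Relation.reflTransGen_iff_eq_or_transGen.mp hm'.1 with rfl | htg
  · exact absurd (Or.inr rfl) hnot
  · exact ⟨m', htg, hm'.2, fun h => hnot (Or.inl h)⟩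

lemma headI_mem {α : Type*} [Inhabited α] {l : List α} (h : l ≠ []) : l.headI ∈ l := by
  cases l with
  | nil => exact absurd rfl h
  | cons a l => simp

open scoped Classical

/-- Pick a fresh good marking reachable from the head of `l`, avoiding `l`. -/
noncomputable def pick (l : List (P → ℕ)) : P → ℕ :=
  if h : {x | ReflTransGen (Step Wminus Wplus) l.headI x}.Infinite then
    Classical.choose (fresh Wminus Wplus h {x | x ∈ l} l.finite_toSet)
  else fun _ => 0

/-- The chain of visited markings (most recent first). -/
noncomputable def chain (m0 : P → ℕ) : ℕ → List (P → ℕ)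
  | 0 => [m0]
  | k + 1 => pick Wminus Wplus (chain m0 k) :: chain m0 k

lemma chain_ne_nil (m0 : P → ℕ) (k : ℕ) : chain Wminus Wplus m0 k ≠ [] := by
  cases k <;> simp [chain]

lemma chain_spec {m0 : P → ℕ}
    (h0 : {x | ReflTransGen (Step Wminus Wplus) m0 x}.Infinite) (k : ℕ) :
    {x | ReflTransGen (Step Wminus Wplus)
        (chain Wminus Wplus m0 k).headI x}.Infinite ∧
    ReflTransGen (Step Wminus Wplus) m0 (chain Wminus Wplus m0 k).headI ∧
    (TransGen (Step Wminus Wplus) (chain Wminus Wplus m0 k).headI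
        (chain Wminus Wplus m0 (k + 1)).headI ∧
      (chain Wminus Wplus m0 (k + 1)).headI ∉ chain Wminus Wplus m0 k) := by
  induction k with
  | zero =>
    have hhead : (chain Wminus Wplus m0 0).headI = m0 := by simp [chain]
    have hgood0 : {x | ReflTransGen (Step Wminus Wplus)
        (chain Wminus Wplus m0 0).headI x}.Infinite := by rw [hhead]; exact h0
    refine ⟨hgood0, by rw [hhead], ?_⟩
    have h1 : (chain Wminus Wplus m0 1).headI = pick Wminus Wplus (chain Wminus Wplus m0 0) := by
      simp [chain]
    rw [h1]
    unfold pick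
    rw [dif_pos hgood0]
    have hspec := Classical.choose_spec (fresh Wminus Wplus hgood0
      {x | x ∈ chain Wminus Wplus m0 0} (chain Wminus Wplus m0 0).finite_toSet)
    exact ⟨hspec.1, hspec.2.2⟩
  | succ k ih =>
    obtain ⟨hgood, hreach, htg, -⟩ := ih
    -- head of chain (k+1) is pick of chain k
    have h1 : (chain Wminus Wplus m0 (k + 1)).headI
        = pick Wminus Wplus (chain Wminus Wplus m0 k) := by simp [chain]
    have hgood' : {x | ReflTransGen (Step Wminus Wplus)
        (chain Wminus Wplus m0 (k + 1)).headI x}.Infinite := by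
      rw [h1]
      unfold pick
      rw [dif_pos hgood]
      exact (Classical.choose_spec (fresh Wminus Wplus hgood
        {x | x ∈ chain Wminus Wplus m0 k} (chain Wminus Wplus m0 k).finite_toSet)).2.1
    refine ⟨hgood', hreach.trans htg.to_reflTransGen, ?_⟩
    have h2 : (chain Wminus Wplus m0 (k + 2)).headI
        = pick Wminus Wplus (chain Wminus Wplus m0 (k + 1)) := by simp [chain]
    rw [h2]
    unfold pick
    rw [dif_pos hgood']
    have := Classical.choose_spec (fresh Wminus Wplus hgood'
      {x | x ∈ chain Wminus Wplus m0 (k + 1)} (chain Wminus Wplus m0 (k + 1)).finite_toSet)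
    exact ⟨this.1, this.2.2⟩

lemma head_mem_chain (m0 : P → ℕ) (i j : ℕ) (hij : i ≤ j) :
    (chain Wminus Wplus m0 i).headI ∈ chain Wminus Wplus m0 j := by
  induction j with
  | zero =>
    interval_cases i
    exact headI_mem (chain_ne_nil Wminus Wplus m0 0)
  | succ j ih =>
    rcases Nat.lt_or_ge i (j + 1) with h | h
    · have := ih (Nat.lt_succ_iff.mp h)
      simp [chain, this]
    · have : i = j + 1 := le_antisymm hij h
      subst this
      exact headI_mem (chain_ne_nil Wminus Wplus m0 (j + 1))

lemma head_transGen {m0 : P → ℕ}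
    (h0 : {x | ReflTransGen (Step Wminus Wplus) m0 x}.Infinite)
    {i j : ℕ} (hij : i < j) :
    TransGen (Step Wminus Wplus) (chain Wminus Wplus m0 i).headI
      (chain Wminus Wplus m0 j).headI := by
  induction j with
  | zero => omega
  | succ j ih =>
    rcases Nat.lt_or_ge i j with h | h
    · exact (ih h).trans (chain_spec Wminus Wplus h0 j).2.2.1
    · have : i = j := by omega
      subst this
      exact (chain_spec Wminus Wplus h0 i).2.2.1

end KarpMillerAux

open KarpMillerAux Relation in
/-- Karp–Miller boundedness characterization: the reachability set of a Petri net
from `m0` is infinite iff there are markings `m1 ≤ m2`, `m1 ≠ m2`, with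
`m0 →* m1 →⁺ m2`. -/
theorem reach_infinite_iff_strictly_increasing_pair
    {P T : Type} [Fintype P] [Fintype T] (Wminus Wplus : P → T → ℕ) (m0 : P → ℕ) :
    {m : P → ℕ | Relation.ReflTransGen (Step Wminus Wplus) m0 m}.Infinite ↔
    (∃ m1 m2 : P → ℕ, Relation.ReflTransGen (Step Wminus Wplus) m0 m1 ∧
      Relation.TransGen (Step Wminus Wplus) m1 m2 ∧ (∀ p, m1 p ≤ m2 p) ∧ m1 ≠ m2) := by
  constructor
  · intro h0
    -- build the infinite repetition-free chain and apply Dickson's lemma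
    set n : ℕ → P → ℕ := fun k => (chain Wminus Wplus m0 k).headI with hn
    have hpwo : @WellQuasiOrdered (P → ℕ) (· ≤ ·) := wellQuasiOrdered_le
    obtain ⟨i, j, hij, hle⟩ := hpwo n
    refine ⟨n i, n j, (chain_spec Wminus Wplus h0 i).2.1,
      head_transGen Wminus Wplus h0 hij, fun p => hle p, ?_⟩
    intro heq
    have hmem : n i ∈ chain Wminus Wplus m0 (j - 1) :=
      head_mem_chain Wminus Wplus m0 i (j - 1) (by omega)
    have hnot : n j ∉ chain Wminus Wplus m0 (j - 1) := by
      have := (chain_spec Wminus Wplus h0 (j - 1)).2.2.2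
      have hj : j - 1 + 1 = j := by omega
      rwa [hj] at this
    exact hnot (heq ▸ hmem)
  · rintro ⟨m1, m2, hreach, htg, hle, hne⟩
    set d : P → ℕ := fun p => m2 p - m1 p with hd
    have hm2 : m2 = fun p => m1 p + d p := by
      funext p; have := hle p; simp [hd]; omega
    set a : ℕ → P → ℕ := fun k p => m1 p + k * d p with ha
    have hstep : ∀ k, TransGen (Step Wminus Wplus) (a k) (a (k + 1)) := by
      intro k
      have := transGen_add Wminus Wplus (d := fun p => k * d p) htg
      have e1 : (fun p => m1 p + k * d p) = a k := rfl
      have e2 : (fun p => m2 p + k * d p) = a (k + 1) := by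
        funext p; rw [hm2]; ring
      rwa [e1, e2] at this
    have hreachall : ∀ k, ReflTransGen (Step Wminus Wplus) m0 (a k) := by
      intro k
      induction k with
      | zero =>
        have : a 0 = m1 := by funext p; simp [ha]
        rw [this]; exact hreach
      | succ k ih => exact ih.trans (hstep k).to_reflTransGen
    obtain ⟨p0, hp0⟩ := Function.ne_iff.mp hne
    have hdp0 : 0 < d p0 := by have := hle p0; simp [hd]; omega
    refine Set.infinite_of_injective_forall_mem (f := a) ?_ hreachall
    intro k l hkl
    have h1 : m1 p0 + k * d p0 = m1 p0 + l * d p0 := congrFun hkl p0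
    have h2 : k * d p0 = l * d p0 := by omega
    exact Nat.eq_of_mul_eq_mul_right hdp0 h2
end
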